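/- Let p ≥ 1, N ≥ 2, weights w₁,…,w_N > 0 with Σᵢ wᵢ = 1, and 0 < χ < 1. Let V : ℝ → ℝ be continuously differentiable and coercive (V(x) → +∞ as |x| → ∞), and assume the function x ↦ inf_{y∈ℝ} (w₁ V(y) + w_N V(x + y)) − log|x| is coercive on ℝ. Let Ẽ_N^p be the confined p-approximated discrete Keller–Segel energy on U = {x ∈ ℝ^N : x₁ < ⋯ < x_N}, and suppose x : [0,T*) → U (with T* ∈ (0,∞]) has differentiable coordinates and satisfies wᵢ xᵢ'(t) = −(∂Ẽ_N^p/∂xᵢ)(x(t)) for every t ∈ [0,T*) and every i. Then there exists δ > 0 such that min_{2 ≤ i ≤ N} (xᵢ(t) − xᵢ₋₁(t)) ≥ δ for all t ∈ [0,T*); in particular no two particles can collide. -/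

import Mathlib

open Real Finset Filter
open scoped ENNReal

/-- `rᵢᵖ = min_p(Δxᵢ, Δxᵢ₊₁) = ((Δxᵢ^{−p} + Δxᵢ₊₁^{−p})/2)^{−1/p}`, with the boundary
convention `r₁ᵖ = 2^{1/p} Δx₂` and `r_Nᵖ = 2^{1/p} Δx_N`, for `N = n + 2` particles
indexed from `0` to `n+1`. -/
noncomputable def rballp (p : ℝ) (n : ℕ) (x : Fin (n + 2) → ℝ) (i : Fin (n + 2)) : ℝ :=
  if i.val = 0 then (2 : ℝ) ^ (1 / p) * (x 1 - x 0)
  else if i.val = n + 1 then (2 : ℝ) ^ (1 / p) * (x i - x (i - 1))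
  else (((x i - x (i - 1)) ^ (-p) + (x (i + 1) - x i) ^ (-p)) / 2) ^ (-1 / p)

/-- The confined `p`-approximated discrete modified Keller–Segel energy with confinement
`V` and chemosensitivity `χ`:
`Ẽ_N^p(x) = Σᵢ wᵢ log(wᵢ/rᵢᵖ) + Σᵢ wᵢ V(xᵢ) + χ Σᵢ Σ_{j≠i} wᵢwⱼ log|xᵢ − xⱼ|`. -/
noncomputable def kspEnergyV (p : ℝ) (n : ℕ) (w : Fin (n + 2) → ℝ) (V : ℝ → ℝ) (χ : ℝ)
    (x : Fin (n + 2) → ℝ) : ℝ :=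
  ∑ i, w i * Real.log (w i / rballp p n x i) + ∑ i, w i * V (x i) +
    χ * ∑ i, ∑ j ∈ Finset.univ.erase i, w i * w j * Real.log |x i - x j|

/-!
Along the flow the energy decreases, since `d/dt Ẽ(x(t)) = -∑ᵢ (∂ᵢẼ)² / wᵢ`. Conversely, the
energy controls the smallest gap: every `|xᵢ - xⱼ|` with `j ≠ i` is at least `2^{-1/p} rᵢᵖ`, so the
attractive interaction is at least `χ ∑ᵢ wᵢ(1 - wᵢ) log rᵢᵖ` up to a constant, and since `χ < 1`
the entropy `-∑ᵢ wᵢ log rᵢᵖ` beats it with coefficients `aᵢ = wᵢ(1 - χ(1 - wᵢ)) > 0`. Bounding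
`log rᵢᵖ` by the logarithm of the gap for one `i` and of the diameter `D = x_N - x_1` for the
others leaves `-a log(gap) - (∑ aᵢ - a) log D`, and the coercivity hypothesis on the two extreme
particles absorbs the `log D` term. Hence `Ẽ ≥ C - a log(gap)`, and the gaps stay above
`exp((C - Ẽ(x(0))) / a)`.
-/

lemma rpow_neg_mean_le_two_rpow_mul_left {p a b : ℝ} (hp : 0 < p) (ha : 0 < a) (hb : 0 ≤ b) :
    ((a ^ (-p) + b ^ (-p)) / 2) ^ (-1 / p) ≤ 2 ^ (1 / p) * a := by
  have ha' : 0 < a ^ (-p) := rpow_pos_of_pos ha _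
  calc ((a ^ (-p) + b ^ (-p)) / 2) ^ (-1 / p) ≤ (a ^ (-p) / 2) ^ (-1 / p) :=
        rpow_le_rpow_of_nonpos (by positivity) (by linarith [rpow_nonneg hb (-p)])
          (div_nonpos_of_nonpos_of_nonneg (by norm_num) hp.le)
    _ = 2 ^ (1 / p) * a := by
        rw [div_rpow ha'.le zero_le_two, ← rpow_mul ha.le, neg_div, rpow_neg zero_le_two,
          show -p * -(1 / p) = 1 by field_simp, rpow_one, div_inv_eq_mul, mul_comm]

lemma rpow_neg_mean_le_two_rpow_mul_right {p a b : ℝ} (hp : 0 < p) (ha : 0 ≤ a) (hb : 0 < b) :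
    ((a ^ (-p) + b ^ (-p)) / 2) ^ (-1 / p) ≤ 2 ^ (1 / p) * b := by
  rw [add_comm]
  exact rpow_neg_mean_le_two_rpow_mul_left hp hb ha

section rballp

variable {p : ℝ} {n : ℕ} {y : Fin (n + 2) → ℝ}

lemma rballp_pos (hy : StrictMono y) (i : Fin (n + 2)) : 0 < rballp p n y i := by
  unfold rballp
  split_ifs with h0 hlast
  · exact mul_pos (by positivity) (sub_pos.2 (hy Fin.zero_lt_one))
  · exact mul_pos (by positivity) (sub_pos.2 (hy (by fin_omega)))
  · have hl : 0 < (y i - y (i - 1)) ^ (-p) := rpow_pos_of_pos (sub_pos.2 (hy (by fin_omega))) _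
    have hr : 0 < (y (i + 1) - y i) ^ (-p) := rpow_pos_of_pos (sub_pos.2 (hy (by fin_omega))) _
    positivity

lemma rballp_le_left_gap (hp : 0 < p) (hy : StrictMono y) {i : Fin (n + 2)} (hi : i.val ≠ 0) :
    rballp p n y i ≤ 2 ^ (1 / p) * (y i - y (i - 1)) := by
  unfold rballp
  rw [if_neg hi]
  split_ifs
  · exact le_rfl
  · exact rpow_neg_mean_le_two_rpow_mul_left hp (sub_pos.2 (hy (by fin_omega)))
      (sub_nonneg.2 (hy.monotone (by fin_omega)))

lemma rballp_le_right_gap (hp : 0 < p) (hy : StrictMono y) {i : Fin (n + 2)}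
    (hi : i.val ≠ n + 1) : rballp p n y i ≤ 2 ^ (1 / p) * (y (i + 1) - y i) := by
  unfold rballp
  split_ifs with h0
  · obtain rfl : i = 0 := Fin.ext h0
    rw [zero_add]
  · exact rpow_neg_mean_le_two_rpow_mul_right hp (sub_nonneg.2 (hy.monotone (by fin_omega)))
      (sub_pos.2 (hy (by fin_omega)))

lemma rballp_le_two_rpow_mul_abs_sub (hp : 0 < p) (hy : StrictMono y) {i j : Fin (n + 2)}
    (hij : j ≠ i) : rballp p n y i ≤ 2 ^ (1 / p) * |y i - y j| := by
  rcases hij.lt_or_gt with h | h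
  · refine (rballp_le_left_gap hp hy (by fin_omega)).trans ?_
    gcongr
    exact (sub_le_sub_left (hy.monotone (by fin_omega)) _).trans (le_abs_self _)
  · refine (rballp_le_right_gap hp hy (by fin_omega)).trans ?_
    gcongr
    rw [abs_sub_comm]
    exact (sub_le_sub_right (hy.monotone (by fin_omega)) _).trans (le_abs_self _)

lemma rballp_le_two_rpow_mul_diam (hp : 0 < p) (hy : StrictMono y) (i : Fin (n + 2)) :
    rballp p n y i ≤ 2 ^ (1 / p) * (y (Fin.last (n + 1)) - y 0) := by
  obtain ⟨j, hj⟩ := exists_ne i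
  refine (rballp_le_two_rpow_mul_abs_sub hp hy hj).trans ?_
  gcongr
  have h0 := hy.monotone (Fin.zero_le i)
  have h0' := hy.monotone (Fin.zero_le j)
  have hN := hy.monotone (Fin.le_last i)
  have hN' := hy.monotone (Fin.le_last j)
  exact abs_sub_le_iff.2 ⟨by linarith, by linarith⟩

lemma log_rballp_le_of_le (hy : StrictMono y) {i : Fin (n + 2)} {d : ℝ}
    (h : rballp p n y i ≤ 2 ^ (1 / p) * d) : log (rballp p n y i) ≤ log 2 / p + log d := by
  have hr := rballp_pos (p := p) hy i
  have hd : 0 < d := pos_of_mul_pos_right (hr.trans_le h) (by positivity)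
  calc log (rballp p n y i) ≤ log (2 ^ (1 / p) * d) := log_le_log hr h
    _ = log 2 / p + log d := by
      rw [log_mul (by positivity) hd.ne', log_rpow two_pos, one_div_mul_eq_div]

end rballp

lemma sum_mul_log_rballp_le_interaction {p : ℝ} (hp : 0 < p) {n : ℕ} {y : Fin (n + 2) → ℝ}
    (hy : StrictMono y) {w : Fin (n + 2) → ℝ} (hw : ∀ i, 0 ≤ w i) (hw1 : ∑ i, w i = 1) :
    ∑ i, w i * (1 - w i) * (log (rballp p n y i) - log 2 / p) ≤
      ∑ i, ∑ j ∈ univ.erase i, w i * w j * log |y i - y j| := by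
  refine sum_le_sum fun i _ => ?_
  have hrest : ∑ j ∈ univ.erase i, w j = 1 - w i := by
    rw [sum_erase_eq_sub (mem_univ i), hw1]
  rw [← hrest, mul_sum, sum_mul]
  refine sum_le_sum fun j hj => mul_le_mul_of_nonneg_left ?_ (mul_nonneg (hw i) (hw j))
  have := log_rballp_le_of_le hy (rballp_le_two_rpow_mul_abs_sub hp hy (ne_of_mem_erase hj))
  linarith

noncomputable def minPairConfinement (a b : ℝ) (V : ℝ → ℝ) (t : ℝ) : ℝ :=
  ⨅ z, a * V z + b * V (t + z)

section minPairConfinement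

variable {a b m : ℝ} {V : ℝ → ℝ}

lemma add_mul_le_pairConfinement (ha : 0 ≤ a) (hb : 0 ≤ b) (hm : ∀ s, m ≤ V s) (t z : ℝ) :
    (a + b) * m ≤ a * V z + b * V (t + z) :=
  (add_mul a b m).trans_le
    (add_le_add (mul_le_mul_of_nonneg_left (hm z) ha) (mul_le_mul_of_nonneg_left (hm (t + z)) hb))

lemma le_minPairConfinement (ha : 0 ≤ a) (hb : 0 ≤ b) (hm : ∀ s, m ≤ V s) (t : ℝ) :
    (a + b) * m ≤ minPairConfinement a b V t :=
  le_ciInf (add_mul_le_pairConfinement ha hb hm t)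

lemma minPairConfinement_le (ha : 0 ≤ a) (hb : 0 ≤ b) (hm : ∀ s, m ≤ V s) (u v : ℝ) :
    minPairConfinement a b V (v - u) ≤ a * V u + b * V v := by
  have hbdd : BddBelow (Set.range fun z => a * V z + b * V (v - u + z)) :=
    ⟨(a + b) * m, Set.forall_mem_range.2 (add_mul_le_pairConfinement ha hb hm (v - u))⟩
  simpa [minPairConfinement] using ciInf_le hbdd u

end minPairConfinement

lemma minPairConfinement_add_le_sum_mul {n : ℕ} {w : Fin (n + 2) → ℝ} (hw : ∀ i, 0 ≤ w i)
    (hw1 : ∑ i, w i = 1) {V : ℝ → ℝ} {m : ℝ} (hm : ∀ s, m ≤ V s) (y : Fin (n + 2) → ℝ) :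
    minPairConfinement (w 0) (w (Fin.last (n + 1))) V (y (Fin.last (n + 1)) - y 0) +
        (1 - w 0 - w (Fin.last (n + 1))) * m ≤ ∑ i, w i * V (y i) := by
  have hpair := minPairConfinement_le (hw 0) (hw (Fin.last (n + 1))) hm (y 0) (y (Fin.last (n + 1)))
  have hends : ∑ i ∈ {0, Fin.last (n + 1)}, w i * (V (y i) - m) ≤ ∑ i, w i * (V (y i) - m) :=
    sum_le_sum_of_subset_of_nonneg (subset_univ _)
      fun i _ _ => mul_nonneg (hw i) (sub_nonneg.2 (hm _))
  rw [sum_pair (Fin.last_pos.ne : (0 : Fin (n + 2)) ≠ Fin.last (n + 1))] at hends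
  simp only [mul_sub, sum_sub_distrib, ← sum_mul, hw1] at hends
  linarith

lemma exists_le_sub_mul_log {G : ℝ → ℝ} {c : ℝ} (hc : ∀ t > 0, c ≤ G t)
    (hG : Tendsto (fun t => G t - log |t|) atTop atTop) :
    ∃ K, ∀ β ∈ Set.Icc (0 : ℝ) 1, ∀ D > 0, K ≤ G D - β * log D := by
  obtain ⟨R, hR⟩ := (hG.eventually_ge_atTop 0).exists_forall_of_atTop
  refine ⟨min 0 (c - log (max R 1)), fun β hβ D hD => ?_⟩
  rcases le_total D (max R 1) with hDR | hRD
  · have hβlog : β * log D ≤ log (max R 1) := by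
      rcases le_total (log D) 0 with h | h
      · nlinarith [log_nonneg (le_max_right R 1), hβ.1]
      · exact (mul_le_of_le_one_left h hβ.2).trans (log_le_log hD hDR)
    linarith [min_le_right 0 (c - log (max R 1)), hc D hD]
  · have hlog : 0 ≤ log D := log_nonneg ((le_max_right R 1).trans hRD)
    have hGD := hR D ((le_max_left R 1).trans hRD)
    rw [abs_of_pos hD] at hGD
    linarith [min_le_left 0 (c - log (max R 1)), mul_le_of_le_one_left hlog hβ.2]

lemma sum_mul_le_sum_mul_add_mul_sub {ι : Type*} {s : Finset ι} {a u : ι → ℝ} {U v c : ℝ}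
    {i₀ : ι} (hi₀ : i₀ ∈ s) (ha : ∀ i ∈ s, 0 ≤ a i) (hu : ∀ i ∈ s, u i ≤ U) (hu₀ : u i₀ ≤ v)
    (hvU : v ≤ U) (hc : c ≤ a i₀) :
    ∑ i ∈ s, a i * u i ≤ (∑ i ∈ s, a i) * U + c * (v - U) := by
  have hsingle : a i₀ * (U - u i₀) ≤ ∑ i ∈ s, a i * (U - u i) :=
    single_le_sum (f := fun i => a i * (U - u i))
      (fun i hi => mul_nonneg (ha i hi) (sub_nonneg.2 (hu i hi))) hi₀
  simp only [mul_sub, sum_sub_distrib, ← sum_mul] at hsingle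
  nlinarith [mul_le_mul_of_nonneg_left hu₀ (ha i₀ hi₀),
    mul_le_mul_of_nonneg_right hc (sub_nonneg.2 hvU)]

theorem exists_sub_mul_log_gap_le_kspEnergyV {p : ℝ} (hp : 0 < p) {n : ℕ} {w : Fin (n + 2) → ℝ}
    (hw : ∀ i, 0 < w i) (hw1 : ∑ i, w i = 1) {χ : ℝ} (hχ0 : 0 ≤ χ) (hχ1 : χ < 1)
    {V : ℝ → ℝ} {m : ℝ} (hm : ∀ s, m ≤ V s)
    (hVW : Tendsto (fun t => minPairConfinement (w 0) (w (Fin.last (n + 1))) V t - log |t|)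
      atTop atTop) :
    ∃ a > 0, ∃ C, ∀ y, StrictMono y → ∀ i : Fin (n + 2), i.val ≠ 0 →
      C - a * log (y i - y (i - 1)) ≤ kspEnergyV p n w V χ y := by
  set N := Fin.last (n + 1)
  set c := log 2 / p
  set a : Fin (n + 2) → ℝ := fun i => w i - χ * (w i * (1 - w i)) with ha_def
  have hw_le : ∀ i, w i ≤ 1 := fun i =>
    hw1 ▸ single_le_sum (fun j _ => (hw j).le) (mem_univ i)
  have ha_pos : ∀ i, 0 < a i := fun i => by
    have := mul_le_mul_of_nonneg_right hχ1.le (mul_nonneg (hw i).le (sub_nonneg.2 (hw_le i)))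
    nlinarith [hw i]
  have ha_le : ∀ i, a i ≤ w i := fun i => by
    simp only [ha_def, sub_le_self_iff]
    exact mul_nonneg hχ0 (mul_nonneg (hw i).le (sub_nonneg.2 (hw_le i)))
  obtain ⟨i₁, hi₁⟩ := Finite.exists_min a
  have hβ : ∑ i, a i - a i₁ ∈ Set.Icc (0 : ℝ) 1 :=
    ⟨sub_nonneg.2 (single_le_sum (fun i _ => (ha_pos i).le) (mem_univ i₁)),
      by linarith [sum_le_sum fun i (_ : i ∈ univ) => ha_le i, ha_pos i₁]⟩
  obtain ⟨K, hK⟩ := exists_le_sub_mul_log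
    (fun t _ => le_minPairConfinement (hw 0).le (hw N).le hm t) hVW
  refine ⟨a i₁, ha_pos i₁, ∑ i, w i * log (w i) - χ * c * ∑ i, w i * (1 - w i) -
    (∑ i, a i) * c + (1 - w 0 - w N) * m + K, fun y hy i₀ hi₀ => ?_⟩
  set r := rballp p n y
  set D := y N - y 0
  set Δ := y i₀ - y (i₀ - 1)
  have hΔ : 0 < Δ := sub_pos.2 (hy (by fin_omega))
  have hΔD : Δ ≤ D := by
    have := hy.monotone (Fin.zero_le (i₀ - 1))
    have := hy.monotone (Fin.le_last i₀)
    linarith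
  have hentropy : ∑ i, w i * log (w i / r i) = ∑ i, w i * log (w i) - ∑ i, w i * log (r i) := by
    rw [← sum_sub_distrib]
    refine sum_congr rfl fun i _ => ?_
    rw [log_div (hw i).ne' (rballp_pos hy i).ne', mul_sub]
  have hinteraction := mul_le_mul_of_nonneg_left
    (sum_mul_log_rballp_le_interaction hp hy (fun i => (hw i).le) hw1) hχ0
  have hcoeff : χ * ∑ i, w i * (1 - w i) * (log (r i) - c) =
      ∑ i, w i * log (r i) - ∑ i, a i * log (r i) - χ * c * ∑ i, w i * (1 - w i) := by
    simp only [mul_sum, ← sum_sub_distrib]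
    exact sum_congr rfl fun i _ => by ring
  have hlog_r : ∑ i, a i * log (r i) ≤ (∑ i, a i) * (c + log D) + a i₁ * (log Δ - log D) := by
    have h := sum_mul_le_sum_mul_add_mul_sub (mem_univ i₀) (fun i _ => (ha_pos i).le)
      (fun i _ => log_rballp_le_of_le hy (rballp_le_two_rpow_mul_diam hp hy i))
      (log_rballp_le_of_le hy (rballp_le_left_gap hp hy hi₀))
      (add_le_add_right (log_le_log hΔ hΔD) c) (hi₁ i₀)
    rwa [add_sub_add_left_eq_sub] at h
  have hconf := minPairConfinement_add_le_sum_mul (fun i => (hw i).le) hw1 hm y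
  have hKD := hK _ hβ D (hΔ.trans_le hΔD)
  rw [kspEnergyV, hentropy]
  linarith

section differentiability

variable {p : ℝ} {n : ℕ} {z : Fin (n + 2) → ℝ}

lemma differentiableAt_rballp (hz : StrictMono z) (i : Fin (n + 2)) :
    DifferentiableAt ℝ (fun y => rballp p n y i) z := by
  unfold rballp
  split_ifs with h0 hlast
  · fun_prop
  · fun_prop
  · have hl : z i - z (i - 1) ≠ 0 := (sub_pos.2 (hz (by fin_omega))).ne'
    have hr : z (i + 1) - z i ≠ 0 := (sub_pos.2 (hz (by fin_omega))).ne'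
    have hmean : ((z i - z (i - 1)) ^ (-p) + (z (i + 1) - z i) ^ (-p)) / 2 ≠ 0 := by
      have := rpow_pos_of_pos (sub_pos.2 (hz (by fin_omega : i - 1 < i))) (-p)
      have := rpow_pos_of_pos (sub_pos.2 (hz (by fin_omega : i < i + 1))) (-p)
      positivity
    fun_prop (disch := assumption)

lemma differentiableAt_kspEnergyV {w : Fin (n + 2) → ℝ} (hw : ∀ i, w i ≠ 0) {V : ℝ → ℝ}
    (hV : Differentiable ℝ V) (χ : ℝ) (hz : StrictMono z) :
    DifferentiableAt ℝ (kspEnergyV p n w V χ) z := by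
  have hr := fun i => differentiableAt_rballp (p := p) hz i
  have hr0 := fun i => (rballp_pos (p := p) hz i).ne'
  have hentropy : ∀ i, DifferentiableAt ℝ (fun y => w i * log (w i / rballp p n y i)) z :=
    fun i => ((((hr i).inv (hr0 i)).const_mul (w i)).log
      (mul_ne_zero (hw i) (inv_ne_zero (hr0 i)))).const_mul (w i)
  have hinteraction : ∀ i, ∀ j ∈ univ.erase i,
      DifferentiableAt ℝ (fun y : Fin (n + 2) → ℝ => w i * w j * log |y i - y j|) z := by
    intro i j hj
    simp only [log_abs]
    have : z i - z j ≠ 0 := sub_ne_zero.2 (hz.injective.ne (ne_of_mem_erase hj).symm)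
    fun_prop (disch := assumption)
  unfold kspEnergyV
  fun_prop

end differentiability

lemma ContinuousLinearMap.apply_eq_sum_mul_single {ι : Type*} [Fintype ι] [DecidableEq ι]
    (L : (ι → ℝ) →L[ℝ] ℝ) (v : ι → ℝ) : L v = ∑ i, v i * L (Pi.single i 1) := by
  conv_lhs => rw [← (Pi.basisFun ℝ ι).sum_repr v]
  simp

theorem antitoneOn_comp_of_hasDerivAt_neg_partial_div {ι : Type*} [Fintype ι] [DecidableEq ι]
    {E : (ι → ℝ) → ℝ} {w : ι → ℝ} (hw : ∀ i, 0 < w i) {x : ℝ → ι → ℝ} {s : Set ℝ}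
    (hs : Convex ℝ s) (hE : ∀ t ∈ s, DifferentiableAt ℝ E (x t))
    (hx : ∀ t ∈ s, ∀ i, HasDerivAt (fun u => x u i) (-(fderiv ℝ E (x t) (Pi.single i 1)) / w i) t) :
    AntitoneOn (fun t => E (x t)) s := by
  have hderiv : ∀ t ∈ s, HasDerivAt (fun t => E (x t))
      (-∑ i, fderiv ℝ E (x t) (Pi.single i 1) ^ 2 / w i) t := by
    intro t ht
    refine ((hE t ht).hasFDerivAt.comp_hasDerivAt t (hasDerivAt_pi.2 (hx t ht))).congr_deriv ?_
    rw [ContinuousLinearMap.apply_eq_sum_mul_single, ← sum_neg_distrib]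
    exact sum_congr rfl fun i _ => by ring
  refine antitoneOn_of_hasDerivWithinAt_nonpos hs
    (fun t ht => (hderiv t ht).continuousAt.continuousWithinAt)
    (fun t ht => (hderiv t (interior_subset ht)).hasDerivWithinAt) fun t _ => ?_
  exact neg_nonpos.2 (sum_nonneg fun i _ => div_nonneg (sq_nonneg _) (hw i).le)

theorem ksp_confined_no_collision_general (p : ℝ) (hp : 1 ≤ p) (n : ℕ)
    (w : Fin (n + 2) → ℝ) (hw : ∀ i, 0 < w i) (hw1 : ∑ i, w i = 1)
    (χ : ℝ) (hχ0 : 0 < χ) (hχ1 : χ < 1)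
    (V : ℝ → ℝ) (hV : ContDiff ℝ 1 V)
    (hVcoer : Tendsto V (cocompact ℝ) atTop)
    (hVW : Tendsto
      (fun t : ℝ => (⨅ y : ℝ, (w 0 * V y + w (Fin.last (n + 1)) * V (t + y))) -
        Real.log |t|) (cocompact ℝ) atTop)
    (T : ℝ≥0∞) (x : ℝ → Fin (n + 2) → ℝ)
    (hmem : ∀ t : ℝ, 0 ≤ t → ENNReal.ofReal t < T → StrictMono (x t))
    (hflow : ∀ t : ℝ, 0 ≤ t → ENNReal.ofReal t < T → ∀ i : Fin (n + 2),
      HasDerivAt (fun s => x s i)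
        (-(fderiv ℝ (kspEnergyV p n w V χ) (x t) (Pi.single i 1)) / w i) t) :
    ∃ δ > 0, ∀ t : ℝ, 0 ≤ t → ENNReal.ofReal t < T →
      ∀ i : Fin (n + 2), i.val ≠ 0 → δ ≤ x t i - x t (i - 1) := by
  obtain ⟨s₀, hs₀⟩ := hV.continuous.exists_forall_le hVcoer
  obtain ⟨a, ha, C, hlow⟩ := exists_sub_mul_log_gap_le_kspEnergyV (p := p) (by linarith) hw hw1
    hχ0.le hχ1 hs₀ (hVW.mono_left atTop_le_cocompact)
  set E := kspEnergyV p n w V χ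
  refine ⟨exp ((C - E (x 0)) / a), exp_pos _, fun t ht htT i hi => ?_⟩
  have hIcc : ∀ s ∈ Set.Icc 0 t, 0 ≤ s ∧ ENNReal.ofReal s < T :=
    fun s hs => ⟨hs.1, (ENNReal.ofReal_le_ofReal hs.2).trans_lt htT⟩
  have hdecay : E (x t) ≤ E (x 0) :=
    antitoneOn_comp_of_hasDerivAt_neg_partial_div hw (convex_Icc 0 t)
      (fun s hs => differentiableAt_kspEnergyV (fun i => (hw i).ne')
        (hV.differentiable one_ne_zero) χ (hmem s (hIcc s hs).1 (hIcc s hs).2))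
      (fun s hs => hflow s (hIcc s hs).1 (hIcc s hs).2)
      (Set.left_mem_Icc.2 ht) (Set.right_mem_Icc.2 ht) ht
  rw [← le_log_iff_exp_le (sub_pos.2 (hmem t ht htT (by fin_omega))), div_le_iff₀ ha]
  linarith [hlow (x t) (hmem t ht htT) i hi]

/-- let `p ≥ 1`, `0 < χ < 1`, `V` of class `C¹` and coercive with
`x ↦ inf_y (w₁V(y) + w_N V(x+y)) − log|x|` coercive. Along any solution
`x : [0,T*) → U` of the confined `p`-approximated discrete Keller–Segel gradient flow
`wᵢ xᵢ' = −∂Ẽ_N^p/∂xᵢ`, the minimal inter-particle distance is bounded below by a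
positive constant `δ` uniformly in time; in particular no two particles can collide. -/
theorem ksp_confined_no_collision (p : ℝ) (hp : 1 ≤ p) (n : ℕ)
    (w : Fin (n + 2) → ℝ) (hw : ∀ i, 0 < w i) (hw1 : ∑ i, w i = 1)
    (χ : ℝ) (hχ0 : 0 < χ) (hχ1 : χ < 1)
    (V : ℝ → ℝ) (hV : ContDiff ℝ 1 V)
    (hVcoer : Tendsto V (cocompact ℝ) atTop)
    (hVW : Tendsto
      (fun t : ℝ => (⨅ y : ℝ, (w 0 * V y + w (Fin.last (n + 1)) * V (t + y))) -
        Real.log |t|) (cocompact ℝ) atTop)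
    (T : ℝ≥0∞) (hT : 0 < T) (x : ℝ → Fin (n + 2) → ℝ)
    (hmem : ∀ t : ℝ, 0 ≤ t → ENNReal.ofReal t < T → StrictMono (x t))
    (hflow : ∀ t : ℝ, 0 ≤ t → ENNReal.ofReal t < T → ∀ i : Fin (n + 2),
      HasDerivAt (fun s => x s i)
        (-(fderiv ℝ (kspEnergyV p n w V χ) (x t) (Pi.single i 1)) / w i) t) :
    ∃ δ > 0, ∀ t : ℝ, 0 ≤ t → ENNReal.ofReal t < T →
      ∀ i : Fin (n + 2), i.val ≠ 0 → δ ≤ x t i - x t (i - 1) :=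
  ksp_confined_no_collision_general p hp n w hw hw1 χ hχ0 hχ1 V hV hVcoer hVW T x hmem hflow
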